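/- arXiv:1808.02287 — 4 statements merged into one kernel-verified Lean document; each statement's English description precedes it below -/
import Mathlib

section
/- For distinct integers t and t', the integral bilinear forms on ℤ² given by the matrices χ_t = [[t, 1], [-1, 0]] and χ_{t'} = [[t', 1], [-1, 0]] are not equivalent; that is, there is no matrix M in GL₂(ℤ) with Mᵀ χ_t M = χ_{t'}. -/
/-!
The quadratic form `x ↦ xᵀ χ_t x` is `t x₀²`, and the `(0,0)` entry of `Mᵀ χ_t M` is its value
at the first column of `M`. So an equivalence `M` from `χ_t` to `χ_{t'}` gives `t' = t a²`, and
its inverse, an equivalence from `χ_{t'}` to `χ_t`, gives `t = t' b²`; this forces `t = t'`.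
-/

/-- For an integer `t`, the matrix of the bilinear form `χ_t`. -/
def chiMat (t : ℤ) : Matrix (Fin 2) (Fin 2) ℤ := !![t, 1; -1, 0]

open Matrix

theorem Matrix.transpose_nonsing_inv_mul_mul_nonsing_inv {n R : Type*} [Fintype n]
    [DecidableEq n] [CommRing R] {A B M : Matrix n n R} (hM : IsUnit M.det)
    (h : Mᵀ * A * M = B) : (M⁻¹)ᵀ * B * M⁻¹ = A := by
  rw [← h, ← Matrix.mul_assoc, ← Matrix.mul_assoc, ← transpose_mul, Matrix.mul_assoc,
    mul_nonsing_inv _ hM, transpose_one, Matrix.one_mul, Matrix.mul_one]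

theorem transpose_mul_chiMat_mul_apply_zero_zero (t : ℤ) (M : Matrix (Fin 2) (Fin 2) ℤ) :
    (Mᵀ * chiMat t * M) 0 0 = t * M 0 0 ^ 2 := by
  simp only [chiMat, mul_apply, Fin.sum_univ_two, transpose_apply, of_apply, cons_val',
    cons_val_zero, cons_val_one, empty_val', cons_val_fin_one]
  ring

theorem Int.eq_of_mul_sq_eq_of_mul_sq_eq {t t' a b : ℤ} (h₁ : t * a ^ 2 = t')
    (h₂ : t' * b ^ 2 = t) : t = t' := by
  rcases eq_or_ne t 0 with rfl | ht
  · simpa using h₁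
  have hab : a ^ 2 * b ^ 2 = 1 := by
    apply mul_left_cancel₀ ht
    linear_combination b ^ 2 * h₁ + h₂
  rw [← h₁, Int.eq_one_of_mul_eq_one_right (sq_nonneg a) hab, mul_one]

/-- For distinct integers `t` and `t'`, the integral bilinear forms on `ℤ²` given by the
matrices `χ_t = [[t, 1], [-1, 0]]` and `χ_{t'} = [[t', 1], [-1, 0]]` are not equivalent:
there is no `M ∈ GL₂(ℤ)` with `Mᵀ χ_t M = χ_{t'}`. -/
theorem chi_forms_not_equivalent (t t' : ℤ) (h : t ≠ t') :
    ¬ ∃ M : Matrix (Fin 2) (Fin 2) ℤ, IsUnit M.det ∧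
      M.transpose * chiMat t * M = chiMat t' := by
  rintro ⟨M, hdet, hM⟩
  have h₁ : t * M 0 0 ^ 2 = t' := by
    rw [← transpose_mul_chiMat_mul_apply_zero_zero, hM]; rfl
  have h₂ : t' * M⁻¹ 0 0 ^ 2 = t := by
    rw [← transpose_mul_chiMat_mul_apply_zero_zero,
      transpose_nonsing_inv_mul_mul_nonsing_inv hdet hM]; rfl
  exact h (Int.eq_of_mul_sq_eq_of_mul_sq_eq h₁ h₂)
end

section
/- If a triangulated category T possesses a strong generator, then every classical generator of T is a strong generator. -/
open CategoryTheory Limits Pretriangulated ZeroObject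

universe v u

variable {C : Type u} [Category.{v} C] [Preadditive C] [HasZeroObject C]
  [HasShift C ℤ] [∀ n : ℤ, (CategoryTheory.shiftFunctor C n).Additive]
  [Pretriangulated C] [HasBinaryBiproducts C]

/-- `addClos S` is `⟨S⟩`: the smallest class of objects containing `S` and closed under
isomorphisms, finite direct sums, direct summands and shifts. -/
inductive addClos (S : Set C) : Set C
  | of {X : C} (h : X ∈ S) : addClos S X
  | isoClosed {X Y : C} (e : X ≅ Y) (h : addClos S X) : addClos S Y
  | zero : addClos S 0
  | shift {X : C} (n : ℤ) (h : addClos S X) : addClos S (X⟦n⟧)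
  | sum {X Y : C} (hX : addClos S X) (hY : addClos S Y) : addClos S (X ⊞ Y)
  | summand {X Y : C} (h : addClos S (X ⊞ Y)) : addClos S X

/-- `starSet A B = A * B` : objects `X` fitting in a distinguished triangle
`X₁ → X → X₂ → X₁[1]` with `X₁ ∈ A` and `X₂ ∈ B`. -/
def starSet (A B : Set C) : Set C :=
  {X | ∃ (X₁ X₂ : C) (f : X₁ ⟶ X) (g : X ⟶ X₂) (h : X₂ ⟶ X₁⟦(1 : ℤ)⟧),
    Triangle.mk f g h ∈ (distTriang C) ∧ X₁ ∈ A ∧ X₂ ∈ B}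

/-- `genStep E k` is `⟨E⟩_{k+1}`, defined by `⟨E⟩_1 = ⟨E⟩` and
`⟨E⟩_{k} = ⟨⟨E⟩_{k-1} * ⟨E⟩_1⟩`. -/
def genStep (E : C) : ℕ → Set C
  | 0 => addClos {E}
  | (k + 1) => addClos (starSet (genStep E k) (addClos {E}))

/-- `E` is a classical generator: `⋃_k ⟨E⟩_k` is the whole category. -/
def IsClassicalGenerator (E : C) : Prop :=
  (⋃ k : ℕ, genStep E k) = Set.univ

/-- `E` is a strong generator: `⟨E⟩_n` is the whole category for some finite `n`. -/
def IsStrongGenerator (E : C) : Prop :=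
  ∃ n : ℕ, genStep E n = Set.univ

/-!
If `G ∈ ⟨E⟩_c`, then `⟨G⟩_n ⊆ ⟨E⟩_{nc}` by induction on `n`, because
`⟨E⟩_a ⋆ ⟨E⟩_b ⊆ ⟨E⟩_{a+b}`. A classical generator `E` has the strong generator `G` in some
`⟨E⟩_c`, and then `⟨G⟩_n = T` forces `⟨E⟩_{nc} = T`.

The inclusion `⟨E⟩_a ⋆ ⟨E⟩_b ⊆ ⟨E⟩_{a+b}` is proved by induction on `b`, without the octahedral
axiom. Since `⟨E⟩_b ⋆ ⟨E⟩_1` is closed under sums and shifts, an object of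
`⟨E⟩_{b+1} = ⟨⟨E⟩_b ⋆ ⟨E⟩_1⟩` is a retract of an object `M` of `⟨E⟩_b ⋆ ⟨E⟩_1`, and an extension
of a retract of `M` is a retract of an extension of `M`. Given distinguished triangles
`X₁ → X → M → X₁[1]` and `Y₁ → M → P → Y₁[1]` with `Y₁ ∈ ⟨E⟩_b`, `P ∈ ⟨E⟩_1`, the fibre of
`X → P` is a retract of `K ⊕ P[-1]` for an extension `K` of `Y₁` by `X₁`, so it lies in
`⟨E⟩_{a+b}` and `X ∈ ⟨E⟩_{a+b} ⋆ ⟨E⟩_1`.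
-/

open Category Preadditive

section

omit [∀ n : ℤ, (CategoryTheory.shiftFunctor C n).Additive] [Pretriangulated C]

variable {S A : Set C}

lemma addClos_subset_addClos {T : Set C} (h : S ⊆ addClos T) : addClos S ⊆ addClos T := by
  intro X hX
  induction hX with
  | of hX => exact h hX
  | isoClosed e _ ih => exact .isoClosed e ih
  | zero => exact .zero
  | shift n _ ih => exact .shift n ih
  | sum _ _ ih₁ ih₂ => exact .sum ih₁ ih₂
  | summand _ ih => exact .summand ih

lemma addClos_addClos_subset : addClos (addClos S) ⊆ addClos S :=
  addClos_subset_addClos subset_rfl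

lemma addClos_subset (hA : addClos A ⊆ A) (h : S ⊆ A) : addClos S ⊆ A :=
  (addClos_subset_addClos fun _ hX => .of (h hX)).trans hA

noncomputable def CategoryTheory.Retract.biprodMap {X Y X' Y' : C} (h : Retract X Y)
    (h' : Retract X' Y') :
    Retract (X ⊞ X') (Y ⊞ Y') where
  i := biprod.map h.i h'.i
  r := biprod.map h.r h'.r

lemma exists_retract_of_mem_addClos (h0 : (0 : C) ∈ S)
    (hshift : ∀ X ∈ S, ∀ n : ℤ, X⟦n⟧ ∈ S) (hsum : ∀ X ∈ S, ∀ Y ∈ S, (X ⊞ Y) ∈ S)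
    {X : C} (hX : X ∈ addClos S) : ∃ M ∈ S, Nonempty (Retract X M) := by
  induction hX with
  | of hX => exact ⟨_, hX, ⟨.refl _⟩⟩
  | isoClosed e _ ih =>
    obtain ⟨M, hM, ⟨r⟩⟩ := ih
    exact ⟨M, hM, ⟨(Retract.ofIso e.symm).trans r⟩⟩
  | zero => exact ⟨0, h0, ⟨.refl _⟩⟩
  | shift n _ ih =>
    obtain ⟨M, hM, ⟨r⟩⟩ := ih
    exact ⟨M⟦n⟧, hshift M hM n, ⟨r.map (shiftFunctor C n)⟩⟩
  | sum _ _ ih₁ ih₂ =>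
    obtain ⟨M, hM, ⟨r⟩⟩ := ih₁
    obtain ⟨M', hM', ⟨r'⟩⟩ := ih₂
    exact ⟨M ⊞ M', hsum M hM M' hM', ⟨r.biprodMap r'⟩⟩
  | summand _ ih =>
    obtain ⟨M, hM, ⟨r⟩⟩ := ih
    exact ⟨M, hM, ⟨(⟨biprod.inl, biprod.fst, by simp⟩ : Retract _ _).trans r⟩⟩

end

lemma mem_of_retract {A : Set C} (hA : addClos A ⊆ A) {X Y : C} (e : Retract X Y) (hY : Y ∈ A) :
    X ∈ A := by
  obtain ⟨N, m, n, hT⟩ := distinguished_cocone_triangle e.i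
  have hn : n = 0 := by
    have h31 : n ≫ e.i⟦(1 : ℤ)⟧' = 0 := comp_distTriang_mor_zero₃₁ _ hT
    calc n = n ≫ (e.i ≫ e.r)⟦(1 : ℤ)⟧' := by simp
      _ = 0 := by rw [Functor.map_comp, ← assoc, h31, zero_comp]
  obtain ⟨iso, -, -⟩ := exists_iso_binaryBiproduct_of_distTriang _ hT hn
  exact hA (.summand (.isoClosed iso (.of hY)))

section StarSet

variable {A B : Set C}

omit [HasBinaryBiproducts C] in
lemma mem_starSet {T : Triangle C} (hT : T ∈ distTriang C) (h₁ : T.obj₁ ∈ A) (h₃ : T.obj₃ ∈ B) :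
    T.obj₂ ∈ starSet A B :=
  ⟨T.obj₁, T.obj₃, T.mor₁, T.mor₂, T.mor₃, hT, h₁, h₃⟩

omit [HasBinaryBiproducts C] in
lemma starSet_mono {A' B' : Set C} (hA : A ⊆ A') (hB : B ⊆ B') : starSet A B ⊆ starSet A' B' := by
  rintro X ⟨X₁, X₂, f, g, h, hT, h₁, h₂⟩
  exact ⟨X₁, X₂, f, g, h, hT, hA h₁, hB h₂⟩

omit [HasBinaryBiproducts C] in
lemma mem_starSet_of_iso {X Y : C} (hX : X ∈ starSet A B) (e : X ≅ Y) : Y ∈ starSet A B := by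
  obtain ⟨X₁, X₂, f, g, h, hT, h₁, h₂⟩ := hX
  refine ⟨X₁, X₂, f ≫ e.hom, e.inv ≫ g, h, isomorphic_distinguished _ hT _ ?_, h₁, h₂⟩
  refine Triangle.isoMk _ _ (Iso.refl X₁) e.symm (Iso.refl X₂) ?_ ?_ ?_ <;> simp [Triangle.mk]

lemma zero_mem_starSet (hA : addClos A ⊆ A) (hB : addClos B ⊆ B) : (0 : C) ∈ starSet A B :=
  mem_starSet (contractible_distinguished 0) (hA .zero) (hB .zero)

lemma shift_mem_starSet (hA : addClos A ⊆ A) (hB : addClos B ⊆ B) {X : C}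
    (hX : X ∈ starSet A B) (n : ℤ) : X⟦n⟧ ∈ starSet A B := by
  obtain ⟨X₁, X₂, f, g, h, hT, h₁, h₂⟩ := hX
  exact mem_starSet (Triangle.shift_distinguished _ hT n) (hA (.shift n (.of h₁)))
    (hB (.shift n (.of h₂)))

noncomputable def piBoolIsoBiprod (f : Bool → C) : (∏ᶜ f) ≅ f true ⊞ f false where
  hom := biprod.lift (Pi.π f true) (Pi.π f false)
  inv := Pi.lift fun
    | true => biprod.fst
    | false => biprod.snd
  hom_inv_id := by
    apply Pi.hom_ext
    rintro (_ | _) <;> simp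
  inv_hom_id := by
    apply biprod.hom_ext <;> simp

lemma biprod_mem_starSet (hA : addClos A ⊆ A) (hB : addClos B ⊆ B) {X Y : C}
    (hX : X ∈ starSet A B) (hY : Y ∈ starSet A B) : (X ⊞ Y) ∈ starSet A B := by
  obtain ⟨X₁, X₂, f, g, h, hT, h₁, h₂⟩ := hX
  obtain ⟨Y₁, Y₂, f', g', h', hT', h₁', h₂'⟩ := hY
  let T : Bool → Triangle C
    | true => Triangle.mk f g h
    | false => Triangle.mk f' g' h'
  have hT : ∀ b, T b ∈ distTriang C := by rintro (_ | _) <;> assumption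
  refine mem_starSet_of_iso (mem_starSet (productTriangle_distinguished T hT) ?_ ?_)
    (piBoolIsoBiprod fun b => (T b).obj₂)
  · exact hA (.isoClosed (piBoolIsoBiprod fun b => (T b).obj₁).symm (.sum (.of h₁) (.of h₁')))
  · exact hB (.isoClosed (piBoolIsoBiprod fun b => (T b).obj₃).symm (.sum (.of h₂) (.of h₂')))

lemma exists_retract_of_mem_addClos_starSet (hA : addClos A ⊆ A) (hB : addClos B ⊆ B) {X : C}
    (hX : X ∈ addClos (starSet A B)) : ∃ M ∈ starSet A B, Nonempty (Retract X M) :=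
  exists_retract_of_mem_addClos (zero_mem_starSet hA hB)
    (fun _ hM n => shift_mem_starSet hA hB hM n)
    (fun _ hM _ hM' => biprod_mem_starSet hA hB hM hM') hX

end StarSet

omit [HasBinaryBiproducts C] in
lemma exists_distTriang_retract_of_retract₃ {X₁ X X₂ M : C} {f : X₁ ⟶ X} {g : X ⟶ X₂}
    {h : X₂ ⟶ X₁⟦(1 : ℤ)⟧} (hT : Triangle.mk f g h ∈ distTriang C) (e : Retract X₂ M) :
    ∃ (X' : C) (f' : X₁ ⟶ X') (g' : X' ⟶ M) (h' : M ⟶ X₁⟦(1 : ℤ)⟧),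
      Triangle.mk f' g' h' ∈ distTriang C ∧ Nonempty (Retract X X') := by
  obtain ⟨X', f', g', hT'⟩ := distinguished_cocone_triangle₂ (e.r ≫ h)
  obtain ⟨a, ha₁, ha₂⟩ : ∃ a : X ⟶ X', f ≫ a = 𝟙 X₁ ≫ f' ∧ g ≫ e.i = a ≫ g' :=
    complete_distinguished_triangle_morphism₂ _ _ hT hT' (𝟙 X₁) e.i (by simp [Triangle.mk])
  obtain ⟨b, hb₁, hb₂⟩ : ∃ b : X' ⟶ X, f' ≫ b = 𝟙 X₁ ≫ f ∧ g' ≫ e.r = b ≫ g :=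
    complete_distinguished_triangle_morphism₂ _ _ hT' hT (𝟙 X₁) e.r (by simp [Triangle.mk])
  let φ := Triangle.homMk (Triangle.mk f g h) (Triangle.mk f g h) (𝟙 X₁) (a ≫ b) (𝟙 X₂)
    (by simp [Triangle.mk, reassoc_of% ha₁, hb₁]) (by simp [Triangle.mk, ← hb₂, ← reassoc_of% ha₂])
    (by simp [Triangle.mk])
  have : IsIso (a ≫ b) := isIso₂_of_isIso₁₃ φ hT hT (IsIso.id _) (IsIso.id _)
  exact ⟨X', f', g', e.r ≫ h, hT', ⟨a, b ≫ inv (a ≫ b), by rw [← assoc, IsIso.hom_inv_id]⟩⟩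

section Fibre

variable {X₁ X B Y₁ P K X' : C} {f : X₁ ⟶ X} {g : X ⟶ B} {h : B ⟶ X₁⟦(1 : ℤ)⟧}
  {u : Y₁ ⟶ B} {p : B ⟶ P} {v : P ⟶ Y₁⟦(1 : ℤ)⟧} {a : X₁ ⟶ K} {θ : K ⟶ Y₁}

lemma nonempty_retract_biprod_shift_of_comp_eq {j : X' ⟶ X} {q : X ⟶ P}
    {w : P ⟶ X'⟦(1 : ℤ)⟧} (hT : Triangle.mk j q w ∈ distTriang C) (l : X' ⟶ K) (k : K ⟶ X')
    (hj : l ≫ k ≫ j = j) : Nonempty (Retract X' (K ⊞ P⟦(-1 : ℤ)⟧)) := by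
  have hD : (𝟙 X' - l ≫ k) ≫ j = 0 := by rw [sub_comp, id_comp, assoc, hj, sub_self]
  let m : P⟦(-1 : ℤ)⟧ ⟶ X' := (Triangle.mk j q w).invRotate.mor₁
  obtain ⟨ε, hε⟩ : ∃ ε : X' ⟶ P⟦(-1 : ℤ)⟧, 𝟙 X' - l ≫ k = ε ≫ m :=
    Triangle.coyoneda_exact₂ _ (inv_rot_of_distTriang _ hT) _ hD
  exact ⟨⟨biprod.lift l ε, biprod.desc k m, by rw [biprod.lift_desc, ← hε]; abel⟩⟩

omit [HasBinaryBiproducts C] in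
lemma exists_comp_eq_of_comp_comp_eq_zero (hT₁ : Triangle.mk f g h ∈ distTriang C)
    (hT₂ : Triangle.mk u p v ∈ distTriang C) (hT₄ : Triangle.mk a θ (u ≫ h) ∈ distTriang C)
    {κ : K ⟶ X} (hκ₁ : a ≫ κ = f) (hκ₂ : θ ≫ u = κ ≫ g) {j : X' ⟶ X} (hj : j ≫ g ≫ p = 0) :
    ∃ l : X' ⟶ K, l ≫ κ = j := by
  have hgh : g ≫ h = 0 := comp_distTriang_mor_zero₂₃ _ hT₁
  obtain ⟨t, ht⟩ : ∃ t : X' ⟶ Y₁, j ≫ g = t ≫ u :=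
    Triangle.coyoneda_exact₂ _ hT₂ (j ≫ g) (by rw [assoc, hj] : (j ≫ g) ≫ p = 0)
  obtain ⟨l, hl⟩ : ∃ l : X' ⟶ K, t = l ≫ θ :=
    Triangle.coyoneda_exact₃ _ hT₄ t (by rw [← assoc, ← ht, assoc, hgh, comp_zero] : t ≫ u ≫ h = 0)
  obtain ⟨ω, hω⟩ : ∃ ω : X' ⟶ X₁, j - l ≫ κ = ω ≫ f :=
    Triangle.coyoneda_exact₂ _ hT₁ _
      (by rw [sub_comp, ht, hl, assoc, assoc, ← hκ₂, sub_self] : (j - l ≫ κ) ≫ g = 0)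
  exact ⟨l + ω ≫ a, by rw [add_comp, assoc, hκ₁, ← hω, add_sub_cancel]⟩

/-- A substitute for the octahedral axiom, which would give a distinguished triangle
`X₁ ⟶ X' ⟶ Y₁ ⟶ X₁⟦1⟧` relating the fibres of `g`, `g ≫ p` and `p`. -/
lemma nonempty_retract_of_distTriang_comp (hT₁ : Triangle.mk f g h ∈ distTriang C)
    (hT₂ : Triangle.mk u p v ∈ distTriang C) {j : X' ⟶ X} {w : P ⟶ X'⟦(1 : ℤ)⟧}
    (hT₃ : Triangle.mk j (g ≫ p) w ∈ distTriang C) (hT₄ : Triangle.mk a θ (u ≫ h) ∈ distTriang C) :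
    Nonempty (Retract X' (K ⊞ P⟦(-1 : ℤ)⟧)) := by
  have hup : u ≫ p = 0 := comp_distTriang_mor_zero₁₂ _ hT₂
  obtain ⟨κ, hκ₁, hκ₂⟩ : ∃ κ : K ⟶ X, a ≫ κ = 𝟙 X₁ ≫ f ∧ θ ≫ u = κ ≫ g :=
    complete_distinguished_triangle_morphism₂ _ _ hT₄ hT₁ (𝟙 X₁) u (by simp [Triangle.mk])
  obtain ⟨l, hl⟩ := exists_comp_eq_of_comp_comp_eq_zero hT₁ hT₂ hT₄ (by simpa using hκ₁) hκ₂
    (comp_distTriang_mor_zero₁₂ _ hT₃)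
  obtain ⟨k, hk⟩ : ∃ k : K ⟶ X', κ = k ≫ j := Triangle.coyoneda_exact₂ _ hT₃ κ
    (by rw [← assoc, ← hκ₂, assoc, hup, comp_zero] : κ ≫ g ≫ p = 0)
  exact nonempty_retract_biprod_shift_of_comp_eq hT₃ l k (by rw [← hk]; exact hl)

end Fibre

section GenStep

variable (E : C)

lemma addClos_genStep_subset (k : ℕ) : addClos (genStep E k) ⊆ genStep E k := by
  cases k <;> exact addClos_addClos_subset

lemma genStep_subset_succ (k : ℕ) : genStep E k ⊆ genStep E (k + 1) := fun X hX =>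
  .of (mem_starSet (contractible_distinguished X) hX .zero)

lemma genStep_mono : Monotone (genStep E) :=
  monotone_nat_of_le_succ (genStep_subset_succ E)

lemma starSet_genStep_subset (a k : ℕ) :
    starSet (genStep E a) (genStep E k) ⊆ genStep E (a + k + 1) := by
  induction k with
  | zero => exact fun _ hX => .of hX
  | succ k ih =>
    have hclosed := addClos_genStep_subset E (a + k + 1)
    rintro X ⟨X₁, X₂, f, g, h, hT, h₁, h₂⟩
    obtain ⟨M, ⟨Y₁, P, u, p, v, hTM, hY, hP⟩, ⟨e⟩⟩ :=
      exists_retract_of_mem_addClos_starSet (addClos_genStep_subset E k) addClos_addClos_subset h₂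
    obtain ⟨X'', f', g', h', hT', ⟨e'⟩⟩ := exists_distTriang_retract_of_retract₃ hT e
    obtain ⟨X', j, w, hT₃⟩ := distinguished_cocone_triangle₁ (g' ≫ p)
    obtain ⟨K, a', θ, hT₄⟩ := distinguished_cocone_triangle₂ (u ≫ h')
    obtain ⟨e''⟩ := nonempty_retract_of_distTriang_comp hT' hTM hT₃ hT₄
    have hK : K ∈ genStep E (a + k + 1) := ih (mem_starSet hT₄ h₁ hY)
    have hP' : P⟦(-1 : ℤ)⟧ ∈ genStep E (a + k + 1) :=
      hclosed (.shift _ (.of (genStep_mono E (Nat.zero_le _) hP)))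
    have hX' : X' ∈ genStep E (a + k + 1) :=
      mem_of_retract hclosed e'' (hclosed (.sum (.of hK) (.of hP')))
    exact mem_of_retract (addClos_genStep_subset E _) e' (.of (mem_starSet hT₃ hX' hP))

-- In the paper's indexing: `G ∈ ⟨E⟩_{m+1}` gives `⟨G⟩_{j+1} ⊆ ⟨E⟩_{(j+1)(m+1)}`.
lemma genStep_subset_genStep_of_mem {G : C} {m : ℕ} (hG : G ∈ genStep E m) (j : ℕ) :
    genStep G j ⊆ genStep E (j * (m + 1) + m) := by
  have hbase : addClos {G} ⊆ genStep E m :=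
    addClos_subset (addClos_genStep_subset E m) (Set.singleton_subset_iff.2 hG)
  induction j with
  | zero => rw [zero_mul, zero_add]; exact hbase
  | succ j ih =>
    rw [show (j + 1) * (m + 1) + m = j * (m + 1) + m + m + 1 by ring]
    exact addClos_subset (addClos_genStep_subset E _)
      ((starSet_mono ih hbase).trans (starSet_genStep_subset E _ m))

end GenStep

/-- If a triangulated category possesses a strong generator, then every classical
generator is a strong generator. -/
theorem isStrongGenerator_of_isClassicalGenerator
    (G : C) (hG : IsStrongGenerator G) (E : C) (hE : IsClassicalGenerator E) :
    IsStrongGenerator E := by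
  obtain ⟨n, hn⟩ := hG
  obtain ⟨m, hm⟩ := Set.mem_iUnion.1 (hE.symm ▸ Set.mem_univ G : G ∈ ⋃ k, genStep E k)
  exact ⟨n * (m + 1) + m, Set.eq_univ_of_univ_subset (hn ▸ genStep_subset_genStep_of_mem E hm n)⟩
end

section
/- Let N be a full triangulated subcategory of a proper k-linear triangulated category T. If N is both right saturated and left saturated (every cohomological functor from N^op, respectively from N, to finite-dimensional vector spaces is representable, respectively corepresentable), then N is admissible in T: the inclusion N ↪ T admits both a right and a left adjoint. -/
open CategoryTheory Limits Pretriangulated ZeroObject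

universe v u

variable {k : Type u} [Field k] {T : Type u} [Category.{v} T] [Preadditive T] [Linear k T]
  [HasZeroObject T] [HasShift T ℤ] [∀ n : ℤ, (CategoryTheory.shiftFunctor T n).Additive]
  [Pretriangulated T]

/-- A class of objects of `T` forming a full triangulated subcategory: closed under
isomorphisms, containing zero, closed under shifts and extensions. -/
structure IsTriangulatedSet (P : Set T) : Prop where
  isoClosed : ∀ {X Y : T}, (X ≅ Y) → X ∈ P → Y ∈ P
  zero : (0 : T) ∈ P
  shift : ∀ (X : T) (n : ℤ), X ∈ P → X⟦n⟧ ∈ P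
  ext₂ : ∀ (Tr : Triangle T), Tr ∈ (distTriang T) → Tr.obj₁ ∈ P → Tr.obj₃ ∈ P →
    Tr.obj₂ ∈ P

variable (S : Set T)

/-- A morphism of `T` between objects of `S`, viewed in the full subcategory. -/
def liftHom {X Y : T} (hX : X ∈ S) (hY : Y ∈ S) (f : X ⟶ Y) :
    (⟨X, hX⟩ : ObjectProperty.FullSubcategory (· ∈ S)) ⟶ ⟨Y, hY⟩ := ObjectProperty.homMk f

/-- A contravariant functor `H : N^op ⥤ Vect k` on the full subcategory `N` on `S` is
cohomological if it sends every distinguished triangle (with objects in `S`) to an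
exact sequence `H(Z) → H(Y) → H(X)`. -/
def IsCohomologicalContra (H : (ObjectProperty.FullSubcategory (· ∈ S))ᵒᵖ ⥤ ModuleCat k) : Prop :=
  ∀ (Tr : Triangle T), Tr ∈ (distTriang T) → ∀ (h1 : Tr.obj₁ ∈ S) (h2 : Tr.obj₂ ∈ S)
    (h3 : Tr.obj₃ ∈ S),
    Function.Exact (H.map (liftHom S h2 h3 Tr.mor₂).op) (H.map (liftHom S h1 h2 Tr.mor₁).op)

/-- A covariant functor `H : N ⥤ Vect k` is (co)homological if it sends every
distinguished triangle (with objects in `S`) to an exact sequence `H(X) → H(Y) → H(Z)`. -/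
def IsCohomologicalCo (H : ObjectProperty.FullSubcategory (· ∈ S) ⥤ ModuleCat k) : Prop :=
  ∀ (Tr : Triangle T), Tr ∈ (distTriang T) → ∀ (h1 : Tr.obj₁ ∈ S) (h2 : Tr.obj₂ ∈ S)
    (h3 : Tr.obj₃ ∈ S),
    Function.Exact (H.map (liftHom S h1 h2 Tr.mor₁)) (H.map (liftHom S h2 h3 Tr.mor₂))

/-!
For `X : T`, the functor `Hom(-, X)` restricted to `N` is cohomological (the long exact
`Hom`-sequence of a distinguished triangle) and finite-dimensional by properness, so right
saturation represents it by an object of `N`. Objectwise representability of `Hom(ι -, X)`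
is exactly the existence of a right adjoint to `ι`. Dually, left saturation applied to
`Hom(X, -)` gives the left adjoint.
-/

section LinearAdjoint

variable (R : Type*) [Ring R] {C D : Type*} [Category.{v} C] [Category.{v} D]
  [Preadditive C] [Preadditive D] [CategoryTheory.Linear R C] [CategoryTheory.Linear R D]

lemma isLeftAdjoint_of_linearYoneda_iso (F : C ⥤ D)
    (h : ∀ Y : D, ∃ X : C,
      Nonempty (F.op ⋙ (linearYoneda R D).obj Y ≅ (linearYoneda R C).obj X)) :
    F.IsLeftAdjoint := by
  refine Functor.isLeftAdjoint_of_rightAdjointObjIsDefined_eq_top (top_unique fun Y _ => ?_)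
  obtain ⟨X, ⟨e⟩⟩ := h Y
  -- forgetting the module structures turns `linearYoneda` into `yoneda` definitionally
  exact (Functor.representableByEquiv.symm
    (Functor.isoWhiskerRight e.symm (forget (ModuleCat R)))).isRepresentable

lemma isRightAdjoint_of_linearCoyoneda_iso (F : C ⥤ D)
    (h : ∀ Y : D, ∃ X : C,
      Nonempty (F ⋙ (linearCoyoneda R D).obj (.op Y) ≅ (linearCoyoneda R C).obj (.op X))) :
    F.IsRightAdjoint := by
  refine Functor.isRightAdjoint_of_leftAdjointObjIsDefined_eq_top (top_unique fun Y _ => ?_)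
  obtain ⟨X, ⟨e⟩⟩ := h Y
  exact (Functor.corepresentableByEquiv.symm
    (Functor.isoWhiskerRight e.symm (forget (ModuleCat R)))).isCorepresentable

end LinearAdjoint

lemma isCohomologicalContra_ι_op_comp_linearYoneda_obj (X : T) :
    IsCohomologicalContra S ((ObjectProperty.ι (· ∈ S)).op ⋙ (linearYoneda k T).obj X) := by
  intro Tr hTr _ _ _ φ
  constructor
  · intro hφ
    obtain ⟨ψ, hψ⟩ := Triangle.yoneda_exact₂ Tr hTr φ hφ
    exact ⟨ψ, hψ.symm⟩
  · rintro ⟨ψ, rfl⟩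
    exact (comp_distTriang_mor_zero₁₂_assoc Tr hTr ψ).trans zero_comp

lemma isCohomologicalCo_ι_comp_linearCoyoneda_obj (X : T) :
    IsCohomologicalCo S (ObjectProperty.ι (· ∈ S) ⋙ (linearCoyoneda k T).obj (.op X)) := by
  intro Tr hTr _ _ _ φ
  constructor
  · intro hφ
    obtain ⟨ψ, hψ⟩ := Triangle.coyoneda_exact₂ Tr hTr φ hφ
    exact ⟨ψ, hψ.symm⟩
  · rintro ⟨ψ, rfl⟩
    exact (Category.assoc (ψ : X ⟶ Tr.obj₁) _ _).trans
      (((ψ : X ⟶ Tr.obj₁) ≫= comp_distTriang_mor_zero₁₂ Tr hTr).trans comp_zero)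

theorem admissible_of_saturated
    -- properness of `T`: `⊕_m Hom(X, Y[m])` is finite-dimensional for all `X, Y`
    (hproper₁ : ∀ X Y : T, FiniteDimensional k (X ⟶ Y))
    -- `N` is right saturated
    (hright : ∀ H : (ObjectProperty.FullSubcategory (· ∈ S))ᵒᵖ ⥤ ModuleCat k, H.Additive →
      IsCohomologicalContra S H → (∀ X, FiniteDimensional k (H.obj X)) →
      ∃ Y : ObjectProperty.FullSubcategory (· ∈ S),
        Nonempty (H ≅ (linearYoneda k (ObjectProperty.FullSubcategory (· ∈ S))).obj Y))
    -- `N` is left saturated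
    (hleft : ∀ H : ObjectProperty.FullSubcategory (· ∈ S) ⥤ ModuleCat k, H.Additive →
      IsCohomologicalCo S H → (∀ X, FiniteDimensional k (H.obj X)) →
      ∃ Y : ObjectProperty.FullSubcategory (· ∈ S),
        Nonempty (H ≅ (linearCoyoneda k (ObjectProperty.FullSubcategory (· ∈ S))).obj (Opposite.op Y))) :
    (∃ q : T ⥤ ObjectProperty.FullSubcategory (· ∈ S), Nonempty (ObjectProperty.ι (· ∈ S) ⊣ q)) ∧
    (∃ p : T ⥤ ObjectProperty.FullSubcategory (· ∈ S), Nonempty (p ⊣ ObjectProperty.ι (· ∈ S))) :=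
  ⟨(isLeftAdjoint_of_linearYoneda_iso k _ fun X =>
      hright _ inferInstance (isCohomologicalContra_ι_op_comp_linearYoneda_obj S X)
        fun Y => hproper₁ Y.unop.obj X).exists_rightAdjoint,
    (isRightAdjoint_of_linearCoyoneda_iso k _ fun X =>
      hleft _ inferInstance (isCohomologicalCo_ι_comp_linearCoyoneda_obj S X)
        fun Y => hproper₁ X Y.obj).exists_leftAdjoint⟩
end

section
/- For the gluing Z = X ⋉_T Y of noncommutative schemes X = Perf-dg(R), Y = Perf-dg(S) along a DG S-R-bimodule T, the glued scheme Z is proper if and only if X and Y are proper and the total cohomology ⊕ᵢ Hⁱ(T) is finite-dimensional over k. -/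
/-!
Cohomology commutes with biproducts of complexes and `⨁ᵢ` commutes with binary products, so
the total cohomology of `R ⊕ S ⊕ T` is the product of the total cohomologies of `R`, `S`
and `T`; a product of vector spaces is finite-dimensional iff each factor is.
-/

open CategoryTheory Limits DirectSum

/-- A cochain complex of `k`-vector spaces (e.g. the underlying complex of a DG algebra or
DG bimodule) has finite-dimensional total cohomology if `⊕ᵢ Hⁱ` is finite-dimensional. -/
def TotalCohomologyFiniteDimensional (k : Type) [Field k]
    (X : CochainComplex (ModuleCat k) ℤ) : Prop :=
  FiniteDimensional k (⨁ i : ℤ, (X.homology i : Type))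

namespace DFinsupp

variable (R : Type*) [Semiring R] {ι : Type*} (M N : ι → Type*)
  [∀ i, AddCommMonoid (M i)] [∀ i, Module R (M i)]
  [∀ i, AddCommMonoid (N i)] [∀ i, Module R (N i)]

noncomputable def prodLinearEquiv : (Π₀ i, M i × N i) ≃ₗ[R] (Π₀ i, M i) × (Π₀ i, N i) :=
  LinearEquiv.ofLinearMap
    ((mapRange.linearMap fun i ↦ LinearMap.fst R _ _).prod
      (mapRange.linearMap fun i ↦ LinearMap.snd R _ _))
    ((mapRange.linearMap fun i ↦ LinearMap.inl R _ _).coprod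
      (mapRange.linearMap fun i ↦ LinearMap.inr R _ _))
    (by ext <;> simp) (by ext <;> simp)

end DFinsupp

theorem Module.finite_prod_iff {R M N : Type*} [Semiring R] [AddCommMonoid M] [Module R M]
    [AddCommMonoid N] [Module R N] :
    Module.Finite R (M × N) ↔ Module.Finite R M ∧ Module.Finite R N :=
  ⟨fun _ ↦ ⟨.of_surjective (LinearMap.fst R M N) Prod.fst_surjective,
    .of_surjective (LinearMap.snd R M N) Prod.snd_surjective⟩, fun ⟨_, _⟩ ↦ inferInstance⟩

attribute [local instance] preservesBinaryBiproducts_of_preservesBiproducts in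
noncomputable def HomologicalComplex.homologyBiprodLinearEquiv {R ι : Type*} [Ring R]
    {c : ComplexShape ι} (X Y : HomologicalComplex (ModuleCat R) c) (i : ι) :
    (X ⊞ Y).homology i ≃ₗ[R] X.homology i × Y.homology i :=
  ((homologyFunctor _ c i).mapBiprod X Y ≪≫ ModuleCat.biprodIsoProd _ _).toLinearEquiv

theorem totalCohomologyFiniteDimensional_biprod_iff (k : Type) [Field k]
    (X Y : CochainComplex (ModuleCat k) ℤ) :
    TotalCohomologyFiniteDimensional k (X ⊞ Y) ↔
      TotalCohomologyFiniteDimensional k X ∧ TotalCohomologyFiniteDimensional k Y := by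
  unfold TotalCohomologyFiniteDimensional
  rw [← Module.finite_prod_iff]
  exact Module.Finite.equiv_iff <|
    (DFinsupp.mapRange.linearEquiv (X.homologyBiprodLinearEquiv Y)).trans
      (DFinsupp.prodLinearEquiv k _ _)

/-- The gluing `Z = X ⋉_T Y` of noncommutative schemes `X = Perf-dg(R)`, `Y = Perf-dg(S)`
along a DG `S-R`-bimodule `T` is proper iff `X`, `Y` are proper and `⊕ᵢ Hⁱ(T)` is
finite-dimensional.  In terms of DG algebras (properness of `Perf-dg(A)` being
finite-dimensionality of the total cohomology of `A`): the lower triangular DG algebra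
`C = R ⋉_T S`, whose underlying complex is `R ⊕ S ⊕ T`, has finite-dimensional total
cohomology iff `R`, `S` and `T` each do. -/
theorem gluing_proper_iff (k : Type) [Field k]
    (R S T : CochainComplex (ModuleCat k) ℤ) :
    TotalCohomologyFiniteDimensional k (R ⊞ S ⊞ T) ↔
      (TotalCohomologyFiniteDimensional k R ∧ TotalCohomologyFiniteDimensional k S ∧
        TotalCohomologyFiniteDimensional k T) := by
  rw [totalCohomologyFiniteDimensional_biprod_iff, totalCohomologyFiniteDimensional_biprod_iff]
end
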